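/- A matrix A : Matrix (Fin N) (Fin N) ℝ is tridiagonal if A i j = 0 whenever the natural numbers i and j satisfy i + 1 < j or j + 1 < i. Let N ≥ 3 and let s, t be natural numbers with s + t ≤ 2. Then for every family of vectors x : Fin s → (Fin N → ℝ) and w : Fin t → (Fin N → ℝ), there exists a nonzero tridiagonal matrix D : Matrix (Fin N) (Fin N) ℝ with D *ᵥ (x i) = 0 for all i : Fin s and Dᵀ *ᵥ (w j) = 0 for all j : Fin t. (Hence a tridiagonal matrix is never uniquely determined by two matrix-vector product queries, so the query complexity of tridiagonal matrices equals 3.) -/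

import Mathlib

/-!
Tridiagonal `N × N` matrices form a space of dimension `3N - 2`, while the `s + t ≤ 2` queries
`D ↦ D *ᵥ xᵢ`, `D ↦ Dᵀ *ᵥ wⱼ` together take values in a space of dimension `(s + t) N ≤ 2N`.
For `N ≥ 3` we have `2N < 3N - 2`, so the query map restricted to tridiagonal matrices has a
nonzero kernel.
-/

open Matrix Module

section

variable {K m n : Type*} [Field K] [Fintype m] [Fintype n]

noncomputable def queryMap {s t : ℕ} (x : Fin s → n → K) (w : Fin t → m → K) :
    Matrix m n K →ₗ[K] (Fin s → m → K) × (Fin t → n → K) :=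
  (LinearMap.pi fun k => (mulVecBilin K K).flip (x k)).prod
    (LinearMap.pi fun k => ((mulVecBilin K K).flip (w k)).comp
      (transposeLinearEquiv m n K K).toLinearMap)

theorem exists_mem_ne_zero_queries_eq_zero_of_lt_finrank {s t : ℕ}
    (V : Submodule K (Matrix m n K)) (x : Fin s → n → K) (w : Fin t → m → K)
    (hV : s * Fintype.card m + t * Fintype.card n < finrank K V) :
    ∃ D ∈ V, D ≠ 0 ∧ (∀ k, D *ᵥ x k = 0) ∧ ∀ k, Dᵀ *ᵥ w k = 0 := by
  have hker : LinearMap.ker ((queryMap x w).domRestrict V) ≠ ⊥ :=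
    LinearMap.ker_ne_bot_of_finrank_lt (by simpa [finrank_prod, finrank_pi_fintype] using hV)
  obtain ⟨D, hD, hD0⟩ := Submodule.exists_mem_ne_zero_of_ne_bot hker
  have hquery : queryMap x w D = 0 := hD
  exact ⟨D, D.2, by simpa using hD0, fun k => congrFun (congrArg Prod.fst hquery) k,
    fun k => congrFun (congrArg Prod.snd hquery) k⟩

noncomputable def Matrix.supportedOn (S : Set (m × n)) : Submodule K (Matrix m n K) :=
  Submodule.span K (stdBasis K m n '' S)

theorem Matrix.apply_eq_zero_of_mem_supportedOn {S : Set (m × n)} {D : Matrix m n K}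
    (hD : D ∈ supportedOn S) {i : m} {j : n} (hij : (i, j) ∉ S) : D i j = 0 := by
  have hsupp := (Basis.mem_span_image (stdBasis K m n)).mp hD
  by_contra hne
  exact hij (hsupp (Finsupp.mem_support_iff.mpr hne))

theorem Matrix.finrank_supportedOn (S : Finset (m × n)) :
    finrank K (supportedOn (K := K) (S : Set (m × n))) = S.card := by
  have hrange : stdBasis K m n '' S = Set.range (stdBasis K m n ∘ ((↑) : S → m × n)) := by
    rw [Set.range_comp, Subtype.range_coe]
  rw [supportedOn, hrange, finrank_span_eq_card
    ((stdBasis K m n).linearIndependent.comp _ Subtype.val_injective), Fintype.card_coe]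

end

def tridiagonalSupport (N : ℕ) : Finset (Fin N × Fin N) :=
  Finset.univ.filter fun p => (p.1 : ℕ) ≤ p.2 + 1 ∧ (p.2 : ℕ) ≤ p.1 + 1

theorem le_card_tridiagonalSupport (n : ℕ) : 3 * n + 1 ≤ (tridiagonalSupport (n + 1)).card := by
  let diagonals : Fin (n + 1) ⊕ Fin n ⊕ Fin n → Fin (n + 1) × Fin (n + 1)
    | .inl i => (i, i)
    | .inr (.inl k) => (k.castSucc, k.succ)
    | .inr (.inr k) => (k.succ, k.castSucc)
  have hinj : Function.Injective diagonals := by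
    rintro (i | i | i) (j | j | j) h <;>
      simp only [diagonals, Prod.ext_iff, Fin.ext_iff, Fin.val_castSucc, Fin.val_succ] at h <;>
      simp only [Sum.inl.injEq, Sum.inr.injEq, reduceCtorEq, Fin.ext_iff] <;> omega
  have hmaps : ∀ a ∈ (Finset.univ : Finset (Fin (n + 1) ⊕ Fin n ⊕ Fin n)),
      diagonals a ∈ tridiagonalSupport (n + 1) := by
    rintro (i | i | i) - <;>
      simp only [diagonals, tridiagonalSupport, Finset.mem_filter, Finset.mem_univ, true_and,
        Fin.val_castSucc, Fin.val_succ] <;> omega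
  have hcard := Finset.card_le_card_of_injOn diagonals hmaps hinj.injOn
  simp only [Finset.card_univ, Fintype.card_sum, Fintype.card_fin] at hcard
  omega

theorem stmt18 (N : ℕ) (hN : 3 ≤ N) (s t : ℕ) (hst : s + t ≤ 2)
    (x : Fin s → (Fin N → ℝ)) (w : Fin t → (Fin N → ℝ)) :
    ∃ D : Matrix (Fin N) (Fin N) ℝ, D ≠ 0 ∧
      (∀ i j : Fin N, ((i : ℕ) + 1 < (j : ℕ) ∨ (j : ℕ) + 1 < (i : ℕ)) → D i j = 0) ∧
      (∀ i : Fin s, D *ᵥ x i = 0) ∧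
      (∀ j : Fin t, Dᵀ *ᵥ w j = 0) := by
  obtain ⟨n, rfl⟩ : ∃ n, N = n + 1 := ⟨N - 1, by omega⟩
  let band : Set (Fin (n + 1) × Fin (n + 1)) := ↑(tridiagonalSupport (n + 1))
  have hdim : s * Fintype.card (Fin (n + 1)) + t * Fintype.card (Fin (n + 1)) <
      finrank ℝ (supportedOn (K := ℝ) band) := by
    rw [finrank_supportedOn, Fintype.card_fin, ← add_mul]
    have hcard := le_card_tridiagonalSupport n
    nlinarith
  obtain ⟨D, hDV, hD0, hx, hw⟩ := exists_mem_ne_zero_queries_eq_zero_of_lt_finrank _ x w hdim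
  refine ⟨D, hD0, fun i j hij => apply_eq_zero_of_mem_supportedOn hDV ?_, hx, hw⟩
  simp only [band, tridiagonalSupport, Finset.coe_filter, Finset.mem_univ, true_and,
    Set.mem_ofPred_eq]
  omega
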